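/- Let φ(X,Y) be a satisfiable circuit formula and y ∈ Y. Let φ₀ = φ[y ↦ false] and φ₁ = φ[y ↦ true], with model counts N = |Sol(φ)|, N₀ = |Sol(φ₀)|, N₁ = |Sol(φ₁)|. Then N = N₀ + N₁, and with p_b = N_b/N the entropies satisfy H(φ) = p₀·(H(φ₀) − log₂ p₀) + p₁·(H(φ₁) − log₂ p₁), where H(ψ) denotes the Shannon entropy of the output distribution of the circuit formula ψ (with H(ψ) := 0 if ψ is unsatisfiable) and 0·log₂ 0 := 0. -/

import Mathlib

private lemma entropy_split {ι : Type} [Fintype ι] (N Nb : ℝ) (M : ι → ℝ)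
    (hM : ∀ i, 0 ≤ M i) (hsum : ∑ i, M i = Nb) (hNb : 0 < Nb) (hN : 0 < N) :
    -∑ i, (M i / N) * Real.logb 2 (M i / N)
      = (Nb / N) * ((-∑ i, (M i / Nb) * Real.logb 2 (M i / Nb)) - Real.logb 2 (Nb / N)) := by
  have hdiv : ∑ i, M i / Nb = 1 := by
    rw [← Finset.sum_div, hsum]; field_simp
  have key : ∀ i, (M i / N) * Real.logb 2 (M i / N)
      = (Nb / N) * ((M i / Nb) * Real.logb 2 (M i / Nb))
        + (Nb / N) * Real.logb 2 (Nb / N) * (M i / Nb) := by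
    intro i
    rcases eq_or_lt_of_le (hM i) with h | h
    · simp [← h]
    · have h1 : M i / N = (Nb / N) * (M i / Nb) := by field_simp
      rw [h1, Real.logb_mul (by positivity) (by positivity)]
      ring
  have hmain : ∑ i, (M i / N) * Real.logb 2 (M i / N)
      = (Nb / N) * (∑ i, (M i / Nb) * Real.logb 2 (M i / Nb))
        + (Nb / N) * Real.logb 2 (Nb / N) := by
    calc ∑ i, (M i / N) * Real.logb 2 (M i / N)
        = ∑ i, ((Nb / N) * ((M i / Nb) * Real.logb 2 (M i / Nb))
            + (Nb / N) * Real.logb 2 (Nb / N) * (M i / Nb)) :=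
          Finset.sum_congr rfl (fun i _ => key i)
      _ = (Nb / N) * (∑ i, (M i / Nb) * Real.logb 2 (M i / Nb))
            + (Nb / N) * Real.logb 2 (Nb / N) * (∑ i, M i / Nb) := by
          rw [Finset.sum_add_distrib, Finset.mul_sum, Finset.mul_sum]
      _ = (Nb / N) * (∑ i, (M i / Nb) * Real.logb 2 (M i / Nb))
            + (Nb / N) * Real.logb 2 (Nb / N) := by rw [hdiv]; ring
  rw [hmain]; ring

private def splitEquiv {V : Type} [DecidableEq V] (Y : Finset V) (y : V) (hy : y ∈ Y) :
    (Bool × ({v // v ∈ Y ∧ v ≠ y} → Bool)) ≃ ({v // v ∈ Y} → Bool) where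
  toFun p := fun v => if h : v.1 = y then p.1 else p.2 ⟨v.1, ⟨v.2, h⟩⟩
  invFun σ := (σ ⟨y, hy⟩, fun v => σ ⟨v.1, v.2.1⟩)
  left_inv p := by
    ext
    · simp
    · simp only []
      rename_i v
      rcases p with ⟨b, σ'⟩
      rcases v with ⟨v, hv, hvy⟩
      simp [dif_neg hvy]
  right_inv σ := by
    funext v
    rcases v with ⟨v, hv⟩
    by_cases h : v = y
    · subst h; simp
    · simp [dif_neg h]

/-- Correctness of the decision step of PSE. For a satisfiable circuit
formula φ with inputs X and outputs Y and a decision variable y ∈ Y, with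
φ₀ = φ[y ↦ false] and φ₁ = φ[y ↦ true] (whose solutions are identified with solutions of
φ setting y accordingly), the model counts satisfy N = N₀ + N₁ and, with p_b = N_b/N,
H(φ) = p₀·(H(φ₀) − log₂ p₀) + p₁·(H(φ₁) − log₂ p₁), where H(ψ) is the base-2 Shannon
entropy of the output distribution (0 if ψ is unsatisfiable). -/
theorem decision_step_correctness
    {V : Type} [Fintype V] [DecidableEq V]
    (X Y : Finset V) (hdisj : Disjoint X Y) (hcover : X ∪ Y = Finset.univ)
    (φ : (V → Bool) → Bool)
    (hcirc : ∀ σ σ' : V → Bool, φ σ = true → φ σ' = true →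
      (∀ v ∈ X, σ v = σ' v) → σ = σ')
    (hsat : ∃ σ, φ σ = true)
    (y : V) (hy : y ∈ Y) :
    let N : ℕ := (Finset.univ.filter (fun ρ : V → Bool => φ ρ = true)).card
    let N₀ : ℕ := (Finset.univ.filter
      (fun ρ : V → Bool => φ ρ = true ∧ ρ y = false)).card
    let N₁ : ℕ := (Finset.univ.filter
      (fun ρ : V → Bool => φ ρ = true ∧ ρ y = true)).card
    let p₀ : ℝ := (N₀ : ℝ) / N
    let p₁ : ℝ := (N₁ : ℝ) / N
    let H : ℝ := -∑ σ : {v // v ∈ Y} → Bool,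
      (((Finset.univ.filter (fun ρ : V → Bool =>
          φ ρ = true ∧ ∀ v : {v // v ∈ Y}, ρ v.1 = σ v)).card : ℝ) / N) *
        Real.logb 2
          (((Finset.univ.filter (fun ρ : V → Bool =>
            φ ρ = true ∧ ∀ v : {v // v ∈ Y}, ρ v.1 = σ v)).card : ℝ) / N)
    let Hb : Bool → ℝ := fun b =>
      if (Finset.univ.filter (fun ρ : V → Bool => φ ρ = true ∧ ρ y = b)).card = 0 then 0
      else -∑ σ : {v // v ∈ Y ∧ v ≠ y} → Bool,
        (((Finset.univ.filter (fun ρ : V → Bool =>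
            φ ρ = true ∧ ρ y = b ∧ ∀ v : {v // v ∈ Y ∧ v ≠ y}, ρ v.1 = σ v)).card : ℝ) /
          ((Finset.univ.filter (fun ρ : V → Bool => φ ρ = true ∧ ρ y = b)).card : ℝ)) *
          Real.logb 2
            (((Finset.univ.filter (fun ρ : V → Bool =>
              φ ρ = true ∧ ρ y = b ∧ ∀ v : {v // v ∈ Y ∧ v ≠ y}, ρ v.1 = σ v)).card : ℝ) /
            ((Finset.univ.filter (fun ρ : V → Bool => φ ρ = true ∧ ρ y = b)).card : ℝ))
    N = N₀ + N₁ ∧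
    H = p₀ * (Hb false - Real.logb 2 p₀) + p₁ * (Hb true - Real.logb 2 p₁) := by
  intro N N₀ N₁ p₀ p₁ H Hb
  -- abbreviations (as plain terms, defeq to the lets)
  set e := splitEquiv Y y hy with he
  -- Part 1 : N = N₀ + N₁
  have hpart1 : N = N₀ + N₁ := by
    show (Finset.univ.filter (fun ρ : V → Bool => φ ρ = true)).card
      = (Finset.univ.filter (fun ρ : V → Bool => φ ρ = true ∧ ρ y = false)).card
        + (Finset.univ.filter (fun ρ : V → Bool => φ ρ = true ∧ ρ y = true)).card
    have h0 : (Finset.univ.filter (fun ρ : V → Bool => φ ρ = true ∧ ρ y = false))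
        = (Finset.univ.filter (fun ρ : V → Bool => φ ρ = true)).filter
            (fun ρ => ¬ ρ y = true) := by
      ext ρ
      simp
    have h1 : (Finset.univ.filter (fun ρ : V → Bool => φ ρ = true ∧ ρ y = true))
        = (Finset.univ.filter (fun ρ : V → Bool => φ ρ = true)).filter
            (fun ρ => ρ y = true) := by
      rw [Finset.filter_filter]
    rw [h0, h1]
    rw [add_comm]
    exact (Finset.card_filter_add_card_filter_not
      (p := fun ρ : V → Bool => ρ y = true)).symm
  refine ⟨hpart1, ?_⟩
  -- N is positive
  have hNpos : (0 : ℝ) < (N : ℝ) := by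
    have : 0 < N := by
      obtain ⟨σ₀, hσ₀⟩ := hsat
      refine Finset.card_pos.mpr ⟨σ₀, ?_⟩
      simp [hσ₀]
    exact_mod_cast this
  -- filter identification
  have hfilter : ∀ (b : Bool) (σ' : {v // v ∈ Y ∧ v ≠ y} → Bool),
      (Finset.univ.filter (fun ρ : V → Bool =>
          φ ρ = true ∧ ∀ v : {v // v ∈ Y}, ρ v.1 = e (b, σ') v))
        = (Finset.univ.filter (fun ρ : V → Bool =>
          φ ρ = true ∧ ρ y = b ∧ ∀ v : {v // v ∈ Y ∧ v ≠ y}, ρ v.1 = σ' v)) := by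
    intro b σ'
    apply Finset.filter_congr
    intro ρ _
    constructor
    · rintro ⟨hφρ, h⟩
      refine ⟨hφρ, ?_, ?_⟩
      · have := h ⟨y, hy⟩
        simpa [he, splitEquiv] using this
      · rintro ⟨v, hv, hvy⟩
        have := h ⟨v, hv⟩
        simpa [he, splitEquiv, dif_neg hvy] using this
    · rintro ⟨hφρ, hb, h⟩
      refine ⟨hφρ, ?_⟩
      rintro ⟨v, hv⟩
      by_cases hvy : v = y
      · subst hvy
        simpa [he, splitEquiv] using hb
      · have := h ⟨v, hv, hvy⟩
        simpa [he, splitEquiv, dif_neg hvy] using this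
  -- fiberwise count
  have hfiber : ∀ b : Bool,
      (Finset.univ.filter (fun ρ : V → Bool => φ ρ = true ∧ ρ y = b)).card
        = ∑ σ' : {v // v ∈ Y ∧ v ≠ y} → Bool,
            (Finset.univ.filter (fun ρ : V → Bool =>
              φ ρ = true ∧ ρ y = b ∧ ∀ v : {v // v ∈ Y ∧ v ≠ y}, ρ v.1 = σ' v)).card := by
    intro b
    rw [Finset.card_eq_sum_card_fiberwise
      (f := fun (ρ : V → Bool) (v : {v // v ∈ Y ∧ v ≠ y}) => ρ v.1)
      (t := Finset.univ) (fun x _ => Finset.mem_univ _)]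
    apply Finset.sum_congr rfl
    intro σ' _
    congr 1
    ext ρ
    simp only [Finset.mem_filter, Finset.mem_univ, true_and, funext_iff, and_assoc]
  -- the per-branch identity
  have hbranch : ∀ b : Bool,
      -∑ σ' : {v // v ∈ Y ∧ v ≠ y} → Bool,
          (((Finset.univ.filter (fun ρ : V → Bool =>
            φ ρ = true ∧ ρ y = b ∧ ∀ v : {v // v ∈ Y ∧ v ≠ y}, ρ v.1 = σ' v)).card : ℝ) / N) *
          Real.logb 2 (((Finset.univ.filter (fun ρ : V → Bool =>
            φ ρ = true ∧ ρ y = b ∧ ∀ v : {v // v ∈ Y ∧ v ≠ y}, ρ v.1 = σ' v)).card : ℝ) / N)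
        = (((Finset.univ.filter (fun ρ : V → Bool => φ ρ = true ∧ ρ y = b)).card : ℝ) / N)
            * (Hb b - Real.logb 2
              (((Finset.univ.filter (fun ρ : V → Bool => φ ρ = true ∧ ρ y = b)).card : ℝ) / N)) := by
    intro b
    by_cases hz : (Finset.univ.filter (fun ρ : V → Bool => φ ρ = true ∧ ρ y = b)).card = 0
    · have hall : ∀ σ' : {v // v ∈ Y ∧ v ≠ y} → Bool,
          (Finset.univ.filter (fun ρ : V → Bool =>
            φ ρ = true ∧ ρ y = b ∧ ∀ v : {v // v ∈ Y ∧ v ≠ y}, ρ v.1 = σ' v)).card = 0 := by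
        intro σ'
        have hsub : (Finset.univ.filter (fun ρ : V → Bool =>
            φ ρ = true ∧ ρ y = b ∧ ∀ v : {v // v ∈ Y ∧ v ≠ y}, ρ v.1 = σ' v))
            ⊆ (Finset.univ.filter (fun ρ : V → Bool => φ ρ = true ∧ ρ y = b)) := by
          intro ρ hρ
          simp only [Finset.mem_filter, Finset.mem_univ, true_and] at hρ ⊢
          exact ⟨hρ.1, hρ.2.1⟩
        have h := Finset.card_le_card hsub
        rw [hz] at h
        exact Nat.le_zero.mp h
      have hz' : ((Finset.univ.filter
          (fun ρ : V → Bool => φ ρ = true ∧ ρ y = b)).card : ℝ) = 0 := by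
        exact_mod_cast hz
      have hterm : ∀ σ' : {v // v ∈ Y ∧ v ≠ y} → Bool,
          (((Finset.univ.filter (fun ρ : V → Bool =>
            φ ρ = true ∧ ρ y = b ∧ ∀ v : {v // v ∈ Y ∧ v ≠ y}, ρ v.1 = σ' v)).card : ℝ) / N) *
          Real.logb 2 (((Finset.univ.filter (fun ρ : V → Bool =>
            φ ρ = true ∧ ρ y = b ∧ ∀ v : {v // v ∈ Y ∧ v ≠ y}, ρ v.1 = σ' v)).card : ℝ) / N)
          = 0 := by
        intro σ'
        rw [hall σ']
        simp
      rw [hz', Finset.sum_eq_zero (fun σ' _ => hterm σ')]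
      simp
    · have hNbpos : (0 : ℝ) <
          ((Finset.univ.filter (fun ρ : V → Bool => φ ρ = true ∧ ρ y = b)).card : ℝ) := by
        exact_mod_cast Nat.pos_of_ne_zero hz
      have hHb : Hb b = -∑ σ' : {v // v ∈ Y ∧ v ≠ y} → Bool,
          (((Finset.univ.filter (fun ρ : V → Bool =>
              φ ρ = true ∧ ρ y = b ∧ ∀ v : {v // v ∈ Y ∧ v ≠ y}, ρ v.1 = σ' v)).card : ℝ) /
            ((Finset.univ.filter (fun ρ : V → Bool => φ ρ = true ∧ ρ y = b)).card : ℝ)) *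
            Real.logb 2
              (((Finset.univ.filter (fun ρ : V → Bool =>
                φ ρ = true ∧ ρ y = b ∧ ∀ v : {v // v ∈ Y ∧ v ≠ y}, ρ v.1 = σ' v)).card : ℝ) /
              ((Finset.univ.filter (fun ρ : V → Bool => φ ρ = true ∧ ρ y = b)).card : ℝ)) := by
        show (if _ then _ else _) = _
        rw [if_neg hz]
      rw [hHb]
      have hsum : ∑ σ' : {v // v ∈ Y ∧ v ≠ y} → Bool,
          ((Finset.univ.filter (fun ρ : V → Bool =>
            φ ρ = true ∧ ρ y = b ∧ ∀ v : {v // v ∈ Y ∧ v ≠ y}, ρ v.1 = σ' v)).card : ℝ)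
          = ((Finset.univ.filter (fun ρ : V → Bool => φ ρ = true ∧ ρ y = b)).card : ℝ) := by
        rw [hfiber b]
        push_cast
        rfl
      exact entropy_split (N : ℝ)
        ((Finset.univ.filter (fun ρ : V → Bool => φ ρ = true ∧ ρ y = b)).card : ℝ)
        _ (fun σ' => by positivity) hsum hNbpos hNpos
  -- reindex the big sum
  have hre : H = (-∑ σ' : {v // v ∈ Y ∧ v ≠ y} → Bool,
        (((Finset.univ.filter (fun ρ : V → Bool =>
          φ ρ = true ∧ ρ y = false ∧ ∀ v : {v // v ∈ Y ∧ v ≠ y}, ρ v.1 = σ' v)).card : ℝ) / N) *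
        Real.logb 2 (((Finset.univ.filter (fun ρ : V → Bool =>
          φ ρ = true ∧ ρ y = false ∧ ∀ v : {v // v ∈ Y ∧ v ≠ y}, ρ v.1 = σ' v)).card : ℝ) / N))
      + (-∑ σ' : {v // v ∈ Y ∧ v ≠ y} → Bool,
        (((Finset.univ.filter (fun ρ : V → Bool =>
          φ ρ = true ∧ ρ y = true ∧ ∀ v : {v // v ∈ Y ∧ v ≠ y}, ρ v.1 = σ' v)).card : ℝ) / N) *
        Real.logb 2 (((Finset.univ.filter (fun ρ : V → Bool =>
          φ ρ = true ∧ ρ y = true ∧ ∀ v : {v // v ∈ Y ∧ v ≠ y}, ρ v.1 = σ' v)).card : ℝ) / N)) := by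
    show -∑ σ : {v // v ∈ Y} → Bool,
        (((Finset.univ.filter (fun ρ : V → Bool =>
            φ ρ = true ∧ ∀ v : {v // v ∈ Y}, ρ v.1 = σ v)).card : ℝ) / N) *
          Real.logb 2
            (((Finset.univ.filter (fun ρ : V → Bool =>
              φ ρ = true ∧ ∀ v : {v // v ∈ Y}, ρ v.1 = σ v)).card : ℝ) / N) = _
    rw [← Equiv.sum_comp e (fun σ : {v // v ∈ Y} → Bool =>
        (((Finset.univ.filter (fun ρ : V → Bool =>
            φ ρ = true ∧ ∀ v : {v // v ∈ Y}, ρ v.1 = σ v)).card : ℝ) / N) *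
          Real.logb 2
            (((Finset.univ.filter (fun ρ : V → Bool =>
              φ ρ = true ∧ ∀ v : {v // v ∈ Y}, ρ v.1 = σ v)).card : ℝ) / N))]
    rw [Fintype.sum_prod_type, Fintype.sum_bool]
    have hrw : ∀ (b : Bool) (σ' : {v // v ∈ Y ∧ v ≠ y} → Bool),
        (((Finset.univ.filter (fun ρ : V → Bool =>
            φ ρ = true ∧ ∀ v : {v // v ∈ Y}, ρ v.1 = e (b, σ') v)).card : ℝ) / N) *
          Real.logb 2
            (((Finset.univ.filter (fun ρ : V → Bool =>
              φ ρ = true ∧ ∀ v : {v // v ∈ Y}, ρ v.1 = e (b, σ') v)).card : ℝ) / N)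
        = (((Finset.univ.filter (fun ρ : V → Bool =>
            φ ρ = true ∧ ρ y = b ∧ ∀ v : {v // v ∈ Y ∧ v ≠ y}, ρ v.1 = σ' v)).card : ℝ) / N) *
          Real.logb 2 (((Finset.univ.filter (fun ρ : V → Bool =>
            φ ρ = true ∧ ρ y = b ∧ ∀ v : {v // v ∈ Y ∧ v ≠ y}, ρ v.1 = σ' v)).card : ℝ) / N) := by
      intro b σ'
      rw [hfilter b σ']
    rw [Finset.sum_congr rfl (fun σ' _ => hrw true σ'),
        Finset.sum_congr rfl (fun σ' _ => hrw false σ')]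
    ring
  rw [hre, hbranch false, hbranch true]
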